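/- Let N ≥ 2 be an integer, r > 0 a real number, and k ≥ 0 an integer. Then A(r)^k = (2√r/(1+r))^k · D(r)⁻¹ · A^k · D(r), where A = A(1). -/
import Mathlib


open Real

/-- The `(N−1)×(N−1)` matrix `A(r)` (rows and columns indexed by `{1,…,N−1}`, realized as
`Fin (N-1)` via `m ↦ m+1`) with `A(r)_{i,j} = r/(1+r)` if `j = i+1`, `1/(1+r)` if
`j = i−1`, and `0` otherwise. Note `A(1)` is the matrix with `1/2` on both off-diagonals. -/
noncomputable def Ar (N : ℕ) (r : ℝ) : Matrix (Fin (N - 1)) (Fin (N - 1)) ℝ :=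
  fun i j =>
    if (i : ℕ) + 1 = (j : ℕ) then r / (1 + r)
    else if (j : ℕ) + 1 = (i : ℕ) then 1 / (1 + r)
    else 0

/-- The diagonal `(N−1)×(N−1)` matrix `D(r)` whose `j`-th diagonal entry is `r^{j/2}`
for `j ∈ {1,…,N−1}` (index `i : Fin (N-1)` corresponds to `j = i+1`). -/
noncomputable def Dr (N : ℕ) (r : ℝ) : Matrix (Fin (N - 1)) (Fin (N - 1)) ℝ :=
  Matrix.diagonal fun i => r ^ ((((i : ℕ) : ℝ) + 1) / 2)

/-- For an integer `N ≥ 2`, a real `r > 0` and an integer `k ≥ 0`,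
`A(r)^k = (2√r/(1+r))^k · D(r)⁻¹ · A^k · D(r)` where `A = A(1)`. -/
theorem stmt7 (N : ℕ) (hN : 2 ≤ N) (r : ℝ) (hr : 0 < r) (k : ℕ) :
    Ar N r ^ k =
      (2 * Real.sqrt r / (1 + r)) ^ k • ((Dr N r)⁻¹ * Ar N 1 ^ k * Dr N r) := by
  set E : Matrix (Fin (N - 1)) (Fin (N - 1)) ℝ :=
    Matrix.diagonal fun i => r ^ (-((((i : ℕ) : ℝ) + 1) / 2)) with hE
  have key : ∀ x : ℝ, r ^ (-x) * r ^ x = 1 := fun x => by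
    rw [← Real.rpow_add hr]; simp
  have key' : ∀ x : ℝ, r ^ x * r ^ (-x) = 1 := fun x => by
    rw [mul_comm]; exact key x
  have hED : E * Dr N r = 1 := by
    rw [hE, Dr, Matrix.diagonal_mul_diagonal]
    simp only [key]
    exact Matrix.diagonal_one
  have hDE : Dr N r * E = 1 := by
    rw [hE, Dr, Matrix.diagonal_mul_diagonal]
    simp only [key']
    exact Matrix.diagonal_one
  have hinv : (Dr N r)⁻¹ = E := Matrix.inv_eq_left_inv hED
  have h1r : (1 : ℝ) + r ≠ 0 := by positivity
  have base : Ar N r = (2 * Real.sqrt r / (1 + r)) • (E * Ar N 1 * Dr N r) := by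
    funext i j
    simp only [Matrix.smul_apply, hE, Dr, Matrix.diagonal_mul, Matrix.mul_diagonal, Ar,
      smul_eq_mul]
    split_ifs with h1 h2
    · -- j = i + 1
      have hij : ((j : ℕ) : ℝ) = ((i : ℕ) : ℝ) + 1 := by exact_mod_cast h1.symm
      rw [hij]
      have : -((((i : ℕ) : ℝ) + 1) / 2) + ((((i : ℕ) : ℝ) + 1 + 1) / 2) = 1/2 := by ring
      rw [mul_comm (r ^ (-((((i : ℕ) : ℝ) + 1) / 2))) _, mul_assoc, ← Real.rpow_add hr, this,
        ← Real.sqrt_eq_rpow]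
      field_simp
      ring_nf
      rw [Real.sq_sqrt hr.le]
    · -- j = i - 1
      have hij : ((i : ℕ) : ℝ) = ((j : ℕ) : ℝ) + 1 := by exact_mod_cast h2.symm
      rw [hij]
      have : -((((j : ℕ) : ℝ) + 1 + 1) / 2) + ((((j : ℕ) : ℝ) + 1) / 2) = -(1/2) := by ring
      rw [mul_comm (r ^ _) _, mul_assoc, ← Real.rpow_add hr, this]
      have hs : r ^ (-(1/2 : ℝ)) = (Real.sqrt r)⁻¹ := by
        rw [Real.rpow_neg hr.le, ← Real.sqrt_eq_rpow]
      rw [hs]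
      have hsne : Real.sqrt r ≠ 0 := by positivity
      field_simp
      norm_num
    · simp
  -- induction
  induction k with
  | zero => simp [hinv, hED]
  | succ n ih =>
    rw [pow_succ, ih, base, hinv, pow_succ, pow_succ]
    rw [Matrix.smul_mul, Matrix.mul_smul, smul_smul]
    congr 1
    calc E * Ar N 1 ^ n * Dr N r * (E * Ar N 1 * Dr N r)
        = E * Ar N 1 ^ n * (Dr N r * E) * Ar N 1 * Dr N r := by
          simp only [Matrix.mul_assoc]
      _ = E * (Ar N 1 ^ n * Ar N 1) * Dr N r := by rw [hDE]; simp only [Matrix.mul_assoc, Matrix.mul_one]
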